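/- Σ_{n=0}^∞ (−1/3)^n / ((2n+1)² · C(4n+2,2n+1)) = (π/(4√3))·ln 3. -/

import Mathlib

/-!
Beta integrals turn the `n`-th term into `∫₀¹ (-1/3)ⁿ (t(1-t))²ⁿ / (2(2n+1)) dt`, and summing
the arctangent series under the integral gives `S = (√3/2) ∫₀¹ u(t) (1/t + 1/(1-t)) dt` with
`u(t) = arctan (t(1-t)/√3)`. Integrate by parts against `w(t) = log t - log (1-t)`: the boundary
terms vanish, `u' = (√3/2) (1/q(t) - 1/q(1-t))` with `q(t) = t² + t + 1`, and the symmetry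
`t ↦ 1 - t` gives `S = -(3/2) ∫₀¹ w/q`. Finally the involution `τ(t) = (1-t)/(1+2t)` of `(0,1)`
preserves `dt/q(t)` and sends `w` to `-w - log 3`, so `∫₀¹ w/q = -(log 3 / 2) ∫₀¹ 1/q`, and
`∫₀¹ 1/q = π/(3√3)`.
-/

open Real MeasureTheory Set Filter Topology intervalIntegral
open scoped Nat

theorem integral_pow_mul_one_sub_pow (m n : ℕ) :
    ∫ t in (0 : ℝ)..1, t ^ m * (1 - t) ^ n = (m ! * n ! : ℝ) / (m + n + 1)! := by
  have hB := Complex.Gamma_mul_Gamma_eq_betaIntegral (s := m + 1) (t := n + 1)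
    (by simp; positivity) (by simp; positivity)
  rw [show (m + 1 : ℂ) + (n + 1) = ((m + n + 1 : ℕ) : ℂ) + 1 by push_cast; ring,
    Complex.Gamma_nat_eq_factorial, Complex.Gamma_nat_eq_factorial,
    Complex.Gamma_nat_eq_factorial, Complex.betaIntegral] at hB
  have hofReal : ∫ t in (0 : ℝ)..1, (t : ℂ) ^ ((m + 1 : ℂ) - 1) * (1 - (t : ℂ)) ^ ((n + 1 : ℂ) - 1)
      = ((∫ t in (0 : ℝ)..1, t ^ m * (1 - t) ^ n : ℝ) : ℂ) := by
    rw [← intervalIntegral.integral_ofReal]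
    refine intervalIntegral.integral_congr fun t _ => ?_
    simp only [add_sub_cancel_right, Complex.cpow_natCast]
    push_cast; ring
  rw [hofReal] at hB
  rw [eq_div_iff (by positivity), mul_comm]
  exact_mod_cast hB.symm

theorem sq_mul_choose_mul_integral (m : ℕ) :
    ((m + 1 : ℝ) ^ 2 * (2 * m + 2).choose (m + 1)) * ∫ t in (0 : ℝ)..1, (t * (1 - t)) ^ m
      = 2 * (m + 1) := by
  have hchoose : ((2 * m + 2).choose (m + 1) * (m + 1)! * (m + 1)! : ℝ) = (2 * m + 2)! := by
    have := Nat.choose_mul_factorial_mul_factorial (show m + 1 ≤ 2 * m + 2 by omega)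
    rw [show 2 * m + 2 - (m + 1) = m + 1 by omega] at this
    exact_mod_cast this
  rw [Nat.factorial_succ (2 * m + 1), Nat.factorial_succ m] at hchoose
  push_cast at hchoose
  simp_rw [mul_pow]
  rw [integral_pow_mul_one_sub_pow, show m + m + 1 = 2 * m + 1 by ring, mul_div_assoc',
    div_eq_iff (by positivity)]
  linear_combination hchoose

theorem hasSum_arctan_div {y : ℝ} (hy0 : y ≠ 0) (hy : |y| < 1) :
    HasSum (fun n : ℕ => (-1) ^ n * y ^ (2 * n) / (2 * n + 1)) (arctan y / y) := by
  refine ((hasSum_arctan (by rwa [norm_eq_abs])).div_const y).congr_fun fun n => ?_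
  push_cast
  field_simp
  ring

theorem arctan_le_self {y : ℝ} (hy : 0 ≤ y) : arctan y ≤ y := by
  simpa using le_tan (arctan_nonneg.mpr hy) (arctan_lt_pi_div_two y)

namespace ArctanCentralBinomialSeries

noncomputable def u (t : ℝ) : ℝ := arctan (t * (1 - t) / √3)

noncomputable def w (t : ℝ) : ℝ := log t - log (1 - t)

def q (t : ℝ) : ℝ := t ^ 2 + t + 1

noncomputable def τ (t : ℝ) : ℝ := (1 - t) / (1 + 2 * t)

theorem q_pos (t : ℝ) : 0 < q t := by
  unfold q; nlinarith [sq_nonneg (2 * t + 1)]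

theorem continuous_inv_q : Continuous fun t => (q t)⁻¹ :=
  (by unfold q; fun_prop : Continuous q).inv₀ fun t => (q_pos t).ne'

theorem u_nonneg_le {t : ℝ} (ht : t ∈ Icc (0 : ℝ) 1) : 0 ≤ u t ∧ u t ≤ t * (1 - t) / √3 := by
  have hy : 0 ≤ t * (1 - t) / √3 :=
    div_nonneg (mul_nonneg ht.1 (by linarith [ht.2])) (by positivity)
  exact ⟨arctan_nonneg.mpr hy, arctan_le_self hy⟩

theorem w_one_sub (t : ℝ) : w (1 - t) = -w t := by
  unfold w; ring_nf

theorem hasSum_integrand {t : ℝ} (ht : t ∈ Ioo (0 : ℝ) 1) :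
    HasSum (fun n : ℕ => (-1 / 3 : ℝ) ^ n / (2 * (2 * n + 1)) * (t * (1 - t)) ^ (2 * n))
      (√3 / 2 * (u t * (t⁻¹ + (1 - t)⁻¹))) := by
  obtain ⟨h0, h1⟩ := ht
  have hp : 0 < t * (1 - t) := mul_pos h0 (by linarith)
  have hy : |t * (1 - t) / √3| < 1 := by
    rw [abs_of_pos (by positivity), div_lt_one (by positivity)]
    nlinarith [Real.lt_sqrt (x := 1) (y := 3) zero_le_one |>.mpr (by norm_num),
      sq_nonneg (2 * t - 1)]
  have hval : √3 / 2 * (u t * (t⁻¹ + (1 - t)⁻¹))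
      = 1 / 2 * (arctan (t * (1 - t) / √3) / (t * (1 - t) / √3)) := by
    unfold u
    field_simp
    ring
  rw [hval]
  refine ((hasSum_arctan_div (by positivity) hy).mul_left (1 / 2)).congr_fun fun n => ?_
  rw [div_pow (t * (1 - t)), pow_mul √3, Real.sq_sqrt zero_le_three, div_pow]
  field_simp

theorem norm_integrand_le (n : ℕ) {t : ℝ} (ht : t ∈ Icc (0 : ℝ) 1) :
    ‖(-1 / 3 : ℝ) ^ n / (2 * (2 * n + 1)) * (t * (1 - t)) ^ (2 * n)‖ ≤ (1 / 3) ^ n := by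
  have hp : 0 ≤ t * (1 - t) := mul_nonneg ht.1 (by linarith [ht.2])
  have hp1 : t * (1 - t) ≤ 1 := by nlinarith [ht.1, ht.2]
  rw [norm_mul, norm_div, norm_pow, norm_pow, norm_of_nonneg hp,
    norm_of_nonneg (by positivity : (0 : ℝ) ≤ 2 * (2 * n + 1))]
  calc ‖(-1 / 3 : ℝ)‖ ^ n / (2 * (2 * n + 1)) * (t * (1 - t)) ^ (2 * n)
      ≤ (1 / 3) ^ n / 1 * 1 := by
        gcongr
        · norm_num
        · linarith [(n.cast_nonneg : (0 : ℝ) ≤ n)]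
        · exact pow_le_one₀ hp hp1
    _ = (1 / 3) ^ n := by ring

theorem term_eq_integral (n : ℕ) :
    (-1 / 3 : ℝ) ^ n / ((2 * (n : ℝ) + 1) ^ 2 * (Nat.choose (4 * n + 2) (2 * n + 1) : ℝ))
      = ∫ t in (0 : ℝ)..1, (-1 / 3 : ℝ) ^ n / (2 * (2 * n + 1)) * (t * (1 - t)) ^ (2 * n) := by
  have h := sq_mul_choose_mul_integral (2 * n)
  rw [show 2 * (2 * n) + 2 = 4 * n + 2 by ring] at h
  push_cast at h
  have hchoose : (0 : ℝ) < Nat.choose (4 * n + 2) (2 * n + 1) := by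
    exact_mod_cast Nat.choose_pos (by omega)
  rw [intervalIntegral.integral_const_mul, div_mul_eq_mul_div,
    div_eq_div_iff (by positivity) (by positivity)]
  linear_combination -(-1 / 3 : ℝ) ^ n * h

theorem hasSum_terms :
    HasSum (fun n : ℕ => (-1 / 3 : ℝ) ^ n /
      ((2 * (n : ℝ) + 1) ^ 2 * (Nat.choose (4 * n + 2) (2 * n + 1) : ℝ)))
      (∫ t in (0 : ℝ)..1, √3 / 2 * (u t * (t⁻¹ + (1 - t)⁻¹))) := by
  simp_rw [term_eq_integral]
  refine intervalIntegral.hasSum_integral_of_dominated_convergence (fun n _ => (1 / 3 : ℝ) ^ n)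
    (fun n => (by fun_prop : Continuous _).aestronglyMeasurable)
    (fun n => ae_of_all _ fun t ht => norm_integrand_le n ?_)
    (ae_of_all _ fun _ _ => summable_geometric_of_lt_one (by norm_num) (by norm_num))
    intervalIntegrable_const ?_
  · rw [uIoc_of_le zero_le_one] at ht
    exact Ioc_subset_Icc_self ht
  · filter_upwards [Measure.ae_ne volume 1] with t ht1 ht
    rw [uIoc_of_le zero_le_one] at ht
    exact hasSum_integrand ⟨ht.1, lt_of_le_of_ne ht.2 ht1⟩

theorem hasDerivAt_u (t : ℝ) : HasDerivAt u (√3 / 2 * ((q t)⁻¹ - (q (1 - t))⁻¹)) t := by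
  have hy : HasDerivAt (fun s : ℝ => s * (1 - s) / √3) ((1 - 2 * t) / √3) t := by
    refine (((hasDerivAt_id t).mul ((hasDerivAt_id t).const_sub 1)).div_const √3).congr_deriv ?_
    simp only [id_eq]; ring
  refine ((hasDerivAt_arctan _).comp t hy).congr_deriv ?_
  have h3 : √3 ^ 2 = 3 := Real.sq_sqrt zero_le_three
  have hq : q t * q (1 - t) = 3 + (t * (1 - t)) ^ 2 := by unfold q; ring
  have := q_pos t
  have := q_pos (1 - t)
  rw [inv_sub_inv (q_pos t).ne' (q_pos (1 - t)).ne', hq, div_pow, h3]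
  field_simp
  unfold q
  linear_combination (4 * t - 2) * h3

theorem hasDerivAt_w {t : ℝ} (ht : t ∈ Ioo (0 : ℝ) 1) : HasDerivAt w (t⁻¹ + (1 - t)⁻¹) t := by
  have h1 : (1 : ℝ) - t ≠ 0 := by linarith [ht.2]
  refine ((hasDerivAt_log ht.1.ne').sub (((hasDerivAt_id t).const_sub 1).log h1)).congr_deriv ?_
  simp only [id_eq]; ring

theorem abs_u_mul_w_le {t : ℝ} (ht : t ∈ Ioo (0 : ℝ) 1) :
    |u t * w t| ≤ (|t * log t| + |(1 - t) * log (1 - t)|) / √3 := by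
  obtain ⟨hu0, hu1⟩ := u_nonneg_le (Ioo_subset_Icc_self ht)
  have h0 := ht.1
  have h1 : 0 < 1 - t := by linarith [ht.2]
  have hw : |w t| ≤ |log t| + |log (1 - t)| := abs_sub _ _
  rw [abs_mul, abs_of_nonneg hu0, abs_mul, abs_mul, abs_of_pos h0, abs_of_pos h1, add_div]
  calc u t * |w t| ≤ t * (1 - t) / √3 * (|log t| + |log (1 - t)|) := by gcongr
    _ ≤ _ := by
      rw [div_mul_eq_mul_div, mul_add, add_div]
      gcongr
      · nlinarith [abs_nonneg (log t)]
      · nlinarith [abs_nonneg (log (1 - t))]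

theorem abs_u_mul_deriv_w_le {t : ℝ} (ht : t ∈ Ioo (0 : ℝ) 1) :
    |u t * (t⁻¹ + (1 - t)⁻¹)| ≤ (√3)⁻¹ := by
  obtain ⟨hu0, hu1⟩ := u_nonneg_le (Ioo_subset_Icc_self ht)
  have h0 := ht.1
  have h1 : 0 < 1 - t := by linarith [ht.2]
  have hsum : t⁻¹ + (1 - t)⁻¹ = (t * (1 - t))⁻¹ := by field_simp; ring
  rw [hsum, abs_of_nonneg (by positivity), ← div_eq_mul_inv, div_le_iff₀ (by positivity)]
  calc u t ≤ t * (1 - t) / √3 := hu1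
    _ = _ := by ring

theorem intervalIntegrable_w : IntervalIntegrable w volume 0 1 := by
  have h := (intervalIntegrable_log' (a := 1) (b := 0)).comp_sub_left 1
  rw [sub_self, sub_zero] at h
  exact intervalIntegrable_log'.sub h

theorem intervalIntegrable_w_div_q : IntervalIntegrable (fun t => w t / q t) volume 0 1 :=
  intervalIntegrable_w.mul_continuousOn continuous_inv_q.continuousOn

theorem intervalIntegrable_u_mul_deriv_w :
    IntervalIntegrable (fun t => u t * (t⁻¹ + (1 - t)⁻¹)) volume 0 1 := by
  refine (intervalIntegrable_const (c := (√3)⁻¹)).mono_fun'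
    (by unfold u; fun_prop : Measurable _).aestronglyMeasurable ?_
  rw [uIoc_of_le zero_le_one, EventuallyLE, ae_restrict_iff' measurableSet_Ioc]
  filter_upwards [Measure.ae_ne volume 1] with t ht1 ht
  exact abs_u_mul_deriv_w_le ⟨ht.1, lt_of_le_of_ne ht.2 ht1⟩

theorem integral_u_mul_deriv_w :
    ∫ t in (0 : ℝ)..1, u t * (t⁻¹ + (1 - t)⁻¹)
      = -(√3 / 2) * ∫ t in (0 : ℝ)..1, ((q t)⁻¹ - (q (1 - t))⁻¹) * w t := by
  have hint : IntervalIntegrable (fun t => ((q t)⁻¹ - (q (1 - t))⁻¹) * w t) volume 0 1 :=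
    intervalIntegrable_w.continuousOn_mul
      (continuous_inv_q.sub (continuous_inv_q.comp (continuous_const.sub continuous_id))).continuousOn
  have hint' :
      IntervalIntegrable (fun t => √3 / 2 * ((q t)⁻¹ - (q (1 - t))⁻¹) * w t) volume 0 1 := by
    simpa only [mul_assoc] using hint.const_mul (√3 / 2)
  set B : ℝ → ℝ := fun t => (|t * log t| + |(1 - t) * log (1 - t)|) / √3
  have hB : Continuous B := by
    have := Real.continuous_mul_log
    fun_prop
  have hB₀ : Tendsto B (𝓝 0) (𝓝 0) := by simpa [B] using hB.tendsto 0
  have hB₁ : Tendsto B (𝓝 1) (𝓝 0) := by simpa [B] using hB.tendsto 1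
  have hlim₀ : Tendsto (fun t => u t * w t) (𝓝[>] 0) (𝓝 0) := by
    refine squeeze_zero_norm' ?_ (hB₀.mono_left nhdsWithin_le_nhds)
    filter_upwards [Ioo_mem_nhdsGT zero_lt_one] with t ht using abs_u_mul_w_le ht
  have hlim₁ : Tendsto (fun t => u t * w t) (𝓝[<] 1) (𝓝 0) := by
    refine squeeze_zero_norm' ?_ (hB₁.mono_left nhdsWithin_le_nhds)
    filter_upwards [Ioo_mem_nhdsLT zero_lt_one] with t ht using abs_u_mul_w_le ht
  have hFTC := integral_eq_sub_of_hasDerivAt_of_tendsto zero_lt_one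
    (fun t ht => (hasDerivAt_u t).mul (hasDerivAt_w ht))
    (hint'.add intervalIntegrable_u_mul_deriv_w) hlim₀ hlim₁
  rw [integral_add hint' intervalIntegrable_u_mul_deriv_w, sub_zero] at hFTC
  simp only [mul_assoc, intervalIntegral.integral_const_mul] at hFTC
  linarith

theorem integral_inv_q_sub_mul_w :
    ∫ t in (0 : ℝ)..1, ((q t)⁻¹ - (q (1 - t))⁻¹) * w t = 2 * ∫ t in (0 : ℝ)..1, w t / q t := by
  have hsplit (t : ℝ) : ((q t)⁻¹ - (q (1 - t))⁻¹) * w t = w t / q t + w (1 - t) / q (1 - t) := by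
    rw [w_one_sub]; ring
  have hrefl := (intervalIntegrable_w_div_q.comp_sub_left 1).symm
  rw [sub_self, sub_zero] at hrefl
  simp_rw [hsplit]
  rw [integral_add intervalIntegrable_w_div_q hrefl,
    intervalIntegral.integral_comp_sub_left (fun t => w t / q t), sub_self, sub_zero]
  ring

theorem τ_mem {t : ℝ} (ht : t ∈ Ioo (0 : ℝ) 1) : τ t ∈ Ioo (0 : ℝ) 1 := by
  obtain ⟨h0, h1⟩ := ht
  exact ⟨div_pos (by linarith) (by linarith), (div_lt_one (by linarith)).mpr (by linarith)⟩

theorem τ_τ {t : ℝ} (ht : 0 < t) : τ (τ t) = t := by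
  unfold τ
  field_simp
  ring

theorem image_τ : τ '' Ioo 0 1 = Ioo 0 1 :=
  Subset.antisymm (image_subset_iff.mpr fun _ => τ_mem) fun t ht => ⟨τ t, τ_mem ht, τ_τ ht.1⟩

theorem hasDerivAt_τ {t : ℝ} (ht : 0 < t) : HasDerivAt τ (-3 / (1 + 2 * t) ^ 2) t := by
  have hd : 1 + 2 * t ≠ 0 := by positivity
  refine (((hasDerivAt_id t).const_sub 1).div
    (((hasDerivAt_id t).const_mul 2).const_add 1) hd).congr_deriv ?_
  simp only [id]
  field_simp
  ring

theorem abs_deriv_τ_mul_w_div_q {t : ℝ} (ht : t ∈ Ioo (0 : ℝ) 1) :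
    |-3 / (1 + 2 * t) ^ 2| * (w (τ t) / q (τ t)) = -(w t + log 3) / q t := by
  obtain ⟨h0, h1⟩ := ht
  have hd : 0 < 1 + 2 * t := by linarith
  have hτ : 1 - τ t = 3 * t / (1 + 2 * t) := by unfold τ; field_simp; ring
  have hq : q (τ t) = 3 * q t / (1 + 2 * t) ^ 2 := by unfold τ q; field_simp; ring
  have hw : w (τ t) = -(w t + log 3) := by
    unfold w
    rw [hτ, τ, log_div (by linarith) hd.ne', log_div (by positivity) hd.ne',
      log_mul (by norm_num) h0.ne']
    ring
  rw [hw, hq, abs_div, abs_neg, abs_of_pos (by positivity : (0 : ℝ) < (1 + 2 * t) ^ 2)]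
  have := q_pos t
  field_simp
  ring

theorem integral_w_div_q :
    ∫ t in (0 : ℝ)..1, w t / q t = -(log 3 / 2) * ∫ t in (0 : ℝ)..1, (q t)⁻¹ := by
  have hIoo (f : ℝ → ℝ) : ∫ t in (0 : ℝ)..1, f t = ∫ t in Ioo (0 : ℝ) 1, f t := by
    rw [intervalIntegral.integral_of_le zero_le_one, integral_Ioc_eq_integral_Ioo]
  have hinj : InjOn τ (Ioo 0 1) := fun x hx y hy hxy => by
    rw [← τ_τ hx.1, hxy, τ_τ hy.1]
  have hsubst := integral_image_eq_integral_abs_deriv_smul measurableSet_Ioo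
    (fun t ht => (hasDerivAt_τ ht.1).hasDerivWithinAt) hinj (fun t => w t / q t)
  simp only [smul_eq_mul] at hsubst
  rw [image_τ, setIntegral_congr_fun measurableSet_Ioo fun t ht => abs_deriv_τ_mul_w_div_q ht,
    ← hIoo, ← hIoo] at hsubst
  have hsplit (t : ℝ) : -(w t + log 3) / q t = -(w t / q t) - log 3 * (q t)⁻¹ := by ring
  simp_rw [hsplit] at hsubst
  rw [integral_sub (f := fun t => -(w t / q t)) intervalIntegrable_w_div_q.neg
    ((continuous_inv_q.intervalIntegrable 0 1).const_mul _), intervalIntegral.integral_neg,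
    intervalIntegral.integral_const_mul] at hsubst
  linarith

theorem integral_inv_q : ∫ t in (0 : ℝ)..1, (q t)⁻¹ = π / (3 * √3) := by
  have h3 : √3 ^ 2 = 3 := Real.sq_sqrt zero_le_three
  have hderiv (t : ℝ) :
      HasDerivAt (fun s => 2 / √3 * arctan ((2 * s + 1) / √3)) (q t)⁻¹ t := by
    have hlin : HasDerivAt (fun s : ℝ => (2 * s + 1) / √3) (2 / √3) t := by
      simpa using (((hasDerivAt_id t).const_mul 2).add_const 1).div_const √3
    refine (((hasDerivAt_arctan _).comp t hlin).const_mul (2 / √3)).congr_deriv ?_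
    have := q_pos t
    rw [div_pow, h3]
    field_simp
    unfold q
    linear_combination (-4 * (t ^ 2 + t + 1)) * h3
  rw [integral_eq_sub_of_hasDerivAt (fun t _ => hderiv t) (continuous_inv_q.intervalIntegrable 0 1)]
  have h1 : (2 * (1 : ℝ) + 1) / √3 = √3 := by
    rw [div_eq_iff (by positivity)]; linear_combination -h3
  rw [h1, show (2 * (0 : ℝ) + 1) / √3 = (√3)⁻¹ by simp, arctan_sqrt_three, arctan_inv_sqrt_three]
  field_simp
  ring

end ArctanCentralBinomialSeries

theorem stmt_17 :
    ∑' n : ℕ, (-1 / 3 : ℝ) ^ n /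
      ((2 * (n : ℝ) + 1) ^ 2 * (Nat.choose (4 * n + 2) (2 * n + 1) : ℝ)) =
    (Real.pi / (4 * Real.sqrt 3)) * Real.log 3 := by
  rw [ArctanCentralBinomialSeries.hasSum_terms.tsum_eq, intervalIntegral.integral_const_mul,
    ArctanCentralBinomialSeries.integral_u_mul_deriv_w,
    ArctanCentralBinomialSeries.integral_inv_q_sub_mul_w,
    ArctanCentralBinomialSeries.integral_w_div_q, ArctanCentralBinomialSeries.integral_inv_q]
  have h3 : √3 ^ 2 = 3 := Real.sq_sqrt zero_le_three
  field_simp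
  linear_combination 4 * h3
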